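/- (Global convergence of ISQA+, stationarity measure.) Let H be a real Hilbert space, f : H → ℝ differentiable with L-Lipschitz gradient, Ψ : H → ℝ ∪ {+∞} convex, proper and lower semicontinuous, F = f + Ψ with optimal value F* attained on a nonempty solution set Ω. Let (x^t) be a sequence with F(x^{t+1}) ≤ F(x^t) for all t, and let k_0 < k_1 < k_2 < ... be indices such that at each k_i there are a self-adjoint operator H_{k_i} with M̃ ⪰ H_{k_i} ⪰ m̃ > 0 and a direction p^{k_i} satisfying the multiplicative inexactness condition with parameter η ∈ [0,1), and x^{k_i + 1} = x^{k_i} + p^{k_i} with F(x^{k_i+1}) ≤ F(x^{k_i}) + γ Q_{H_{k_i}}(p^{k_i}; x^{k_i}) for γ ∈ (0,1). For each t let G_t be the minimizer of Q_I(·; x^t) (the subproblem with identity operator). Then ‖G_{k_t}‖ → 0 as t → ∞, and for all t ≥ 0: min_{0 ≤ i ≤ t} ‖G_{k_i}‖² ≤ ((F(x^0) − F*) / (γ (t+1))) · (M̃² (1 + m̃^{-1} + √(1 − 2M̃^{-1} + m̃^{-2}))²) / (2 (1 − η) m̃). Moreover, G_t = 0 if and only if 0 ∈ ∂F(x^t),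 so every limit point of (x^{k_t}) is a stationary point of F. -/

import Mathlib

open Metric Filter

/-- The regularized objective `F = f + Ψ` (with `Ψ` extended-real-valued). -/
noncomputable def objF {H : Type*} [NormedAddCommGroup H] [InnerProductSpace ℝ H]
    (f : H → ℝ) (Ψ : H → EReal) (x : H) : EReal := (f x : EReal) + Ψ x

/-- The subproblem model `Q_A(p; x) = ⟨∇f(x), p⟩ + (1/2)⟨p, A p⟩ + Ψ(x + p) − Ψ(x)`. -/
noncomputable def modelQ {H : Type*} [NormedAddCommGroup H] [InnerProductSpace ℝ H]
    (f' : H → H) (Ψ : H → EReal) (A : H →L[ℝ] H) (x p : H) : EReal :=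
  (((inner ℝ (f' x) p : ℝ) + (1 / 2) * (inner ℝ p (A p) : ℝ) : ℝ) : EReal) + Ψ (x + p) - Ψ x

/-- Convexity for an extended-real-valued function. -/
def ConvexEReal {H : Type*} [NormedAddCommGroup H] [InnerProductSpace ℝ H]
    (Ψ : H → EReal) : Prop :=
  ∀ x y : H, ∀ a b : ℝ, 0 ≤ a → 0 ≤ b → a + b = 1 →
    Ψ (a • x + b • y) ≤ (a : EReal) * Ψ x + (b : EReal) * Ψ y

/-- Properness: `Ψ` never takes the value `−∞` and is finite somewhere
(i.e. `Ψ : H → ℝ ∪ {+∞}` is proper). -/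
def ProperEReal {H : Type*} (Ψ : H → EReal) : Prop :=
  (∀ x, Ψ x ≠ ⊥) ∧ (∃ x, Ψ x ≠ ⊤)

/-- The convex subdifferential of the extended-real-valued function `Ψ` at `x`. -/
def subdiffPsi {H : Type*} [NormedAddCommGroup H] [InnerProductSpace ℝ H]
    (Ψ : H → EReal) (x : H) : Set H :=
  {v | ∀ z : H, Ψ x + ((inner ℝ v (z - x) : ℝ) : EReal) ≤ Ψ z}

/-- The generalized gradient `∂F(x) = ∇f(x) + ∂Ψ(x)` of `F = f + Ψ`. -/
def subdiffF {H : Type*} [NormedAddCommGroup H] [InnerProductSpace ℝ H]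
    (f' : H → H) (Ψ : H → EReal) (x : H) : Set H :=
  {w | ∃ v ∈ subdiffPsi Ψ x, w = f' x + v}

/-! The minimizer `G` of the identity model at `x` is a proximal-gradient step: `x + G` minimizes
`Ψ + ⟪∇f x, · - x⟫ + ½‖· - x‖²`, so `-(∇f x + G) ∈ ∂Ψ(x + G)`. Testing this subgradient at `x`
gives `⟪∇f x, G⟫ + Ψ(x + G) - Ψ(x) ≤ -‖G‖²`, hence `Q*_H ≤ Q_H(αG) ≤ -(α - α²M̃/2)‖G‖²`. With the
inexactness and Armijo conditions, the step at `k_i` decreases `F` by at least a fixed multiple of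
`‖G_{k_i}‖²`; telescoping against `F ≥ F*` makes `∑ ‖G_{k_i}‖²` finite, which gives both the limit
and the rate. For stationarity, `G = 0` exactly when `-∇f x ∈ ∂Ψ(x)`, and since `Ψ` is lower
semicontinuous the graph of `∂Ψ` is closed, so the subgradients `-(∇f + G)` at `x^{k_t} + G_{k_t}`
pass to every limit point. -/

lemma nonpos_of_forall_le_mul {c d : ℝ} (h : ∀ l : ℝ, 0 < l → l < 1 → c ≤ l * d) : c ≤ 0 := by
  have hlim : Tendsto (fun l : ℝ => l * d) (nhdsWithin 0 (Set.Ioi 0)) (nhds 0) := by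
    simpa using ((continuous_mul_const d).tendsto 0).mono_left nhdsWithin_le_nhds
  refine ge_of_tendsto hlim ?_
  filter_upwards [Ioo_mem_nhdsGT (zero_lt_one' ℝ)] with l hl using h l hl.1 hl.2

lemma EReal.exists_coe_le_of_sub_le {y : EReal} {s η : ℝ} (hs : (s : EReal) ≤ y)
    (h : y - s ≤ (η : EReal) * -(s : EReal)) : ∃ r : ℝ, y = r ∧ r ≤ (1 - η) * s := by
  induction y using EReal.rec with
  | bot => exact absurd hs (by simp)
  | top => simp [← EReal.coe_neg, ← EReal.coe_mul] at h
  | coe r =>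
    refine ⟨r, rfl, ?_⟩
    rw [← EReal.coe_neg, ← EReal.coe_mul, ← EReal.coe_sub, EReal.coe_le_coe_iff] at h
    linarith

lemma two_le_and_two_mul_inv_le {m M : ℝ} (hm : 0 < m) (hmM : m ≤ M) :
    2 ≤ 1 + m⁻¹ + √(1 - 2 * M⁻¹ + m⁻¹ ^ 2) ∧ 2 * m⁻¹ ≤ 1 + m⁻¹ + √(1 - 2 * M⁻¹ + m⁻¹ ^ 2) := by
  have h : |1 - m⁻¹| ≤ √(1 - 2 * M⁻¹ + m⁻¹ ^ 2) :=
    Real.abs_le_sqrt (by nlinarith [inv_anti₀ hm hmM])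
  constructor <;> linarith [le_abs_self (1 - m⁻¹), neg_abs_le (1 - m⁻¹)]

/-- `α - α ^ 2 * M / 2` is the decrease of the model along `α • G` (see `iInf_modelQ_le`); the
paper's constant dominates its inverse at `α = min 1 M⁻¹`. -/
lemma exists_one_le_mul_sub_sq {m M : ℝ} (hm : 0 < m) (hmM : m ≤ M) :
    ∃ α : ℝ, 0 ≤ α ∧ α ≤ 1 ∧
      1 ≤ M ^ 2 * (1 + m⁻¹ + √(1 - 2 * M⁻¹ + m⁻¹ ^ 2)) ^ 2 / (2 * m) * (α - α ^ 2 * M / 2) := by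
  obtain ⟨hT2, hTm⟩ := two_le_and_two_mul_inv_le hm hmM
  set T := 1 + m⁻¹ + √(1 - 2 * M⁻¹ + m⁻¹ ^ 2)
  have hM : 0 < M := hm.trans_le hmM
  rcases le_or_gt 1 M with hM1 | hM1
  · refine ⟨M⁻¹, by positivity, inv_le_one_of_one_le₀ hM1, ?_⟩
    have : M ^ 2 * T ^ 2 / (2 * m) * (M⁻¹ - M⁻¹ ^ 2 * M / 2) = M * T ^ 2 / (4 * m) := by
      field_simp; ring
    have hT : 4 ≤ T ^ 2 := by nlinarith
    rw [this, le_div_iff₀ (by positivity)]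
    nlinarith [mul_le_mul_of_nonneg_left hT hM.le]
  · refine ⟨1, zero_le_one, le_rfl, ?_⟩
    have hmT : 2 ≤ m * T := by
      have := mul_le_mul_of_nonneg_left hTm hm.le
      rwa [mul_left_comm, mul_inv_cancel₀ hm.ne', mul_one] at this
    have hMT : 4 ≤ M ^ 2 * T ^ 2 := by nlinarith [mul_le_mul hmM hmM hm.le hM.le]
    rw [div_mul_eq_mul_div, le_div_iff₀ (by positivity)]
    nlinarith [mul_le_mul_of_nonneg_right hMT (by linarith : (0 : ℝ) ≤ 1 - 1 ^ 2 * M / 2)]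

lemma Finset.inf'_range_le_div {a : ℕ → ℝ} {B : ℝ} (t : ℕ)
    (h : ∑ i ∈ Finset.range (t + 1), a i ≤ B) :
    (Finset.range (t + 1)).inf' (Finset.nonempty_range_iff.mpr (Nat.succ_ne_zero t)) a ≤
      B / (t + 1) := by
  set μ := (Finset.range (t + 1)).inf' (Finset.nonempty_range_iff.mpr (Nat.succ_ne_zero t)) a
  have hμ : ∀ i ∈ Finset.range (t + 1), μ ≤ a i := fun i hi => Finset.inf'_le a hi
  have := Finset.card_nsmul_le_sum _ _ _ hμ
  rw [Finset.card_range, nsmul_eq_mul] at this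
  push_cast at this
  rw [le_div_iff₀ (by positivity)]
  linarith

lemma sum_range_le_mul_sub {a u : ℕ → ℝ} {k : ℕ → ℕ} {D : ℝ} (hu : Antitone u)
    (hk : StrictMono k) (hD : 0 ≤ D) (h : ∀ i, a i ≤ D * (u (k i) - u (k i + 1))) (n : ℕ) :
    ∑ i ∈ Finset.range n, a i ≤ D * (u 0 - u (k n)) :=
  calc ∑ i ∈ Finset.range n, a i
      ≤ ∑ i ∈ Finset.range n, D * (u (k i) - u (k (i + 1))) := Finset.sum_le_sum fun i _ =>
        (h i).trans (mul_le_mul_of_nonneg_left (by linarith [hu (hk i.lt_succ_self)]) hD)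
    _ = D * (u (k 0) - u (k n)) := by rw [← Finset.mul_sum, Finset.sum_range_sub']
    _ ≤ D * (u 0 - u (k n)) := by gcongr; exact hu (k 0).zero_le

lemma EReal.exists_antitone_coe {u : ℕ → EReal} {a b : ℝ} (hu : Antitone u) (h0 : u 0 = b)
    (ha : ∀ t, (a : EReal) ≤ u t) :
    ∃ v : ℕ → ℝ, (∀ t, u t = v t) ∧ Antitone v ∧ v 0 = b ∧ ∀ t, a ≤ v t := by
  have hv (t : ℕ) : u t = (u t).toReal :=
    (EReal.coe_toReal (ne_top_of_le_ne_top (h0 ▸ EReal.coe_ne_top b) (hu t.zero_le))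
      (ne_bot_of_le_ne_bot (EReal.coe_ne_bot a) (ha t))).symm
  refine ⟨fun t => (u t).toReal, hv, fun s t hst => ?_, by simp [h0], fun t => ?_⟩
  · rw [← EReal.coe_le_coe_iff, ← hv, ← hv]
    exact hu hst
  · rw [← EReal.coe_le_coe_iff, ← hv]
    exact ha t

section

variable {H : Type*} [NormedAddCommGroup H] [InnerProductSpace ℝ H] {f : H → ℝ} {f' : H → H}
  {Ψ : H → EReal}

lemma ConvexEReal.exists_coe_le_on_segment (hconv : ConvexEReal Ψ) (hbot : ∀ y, Ψ y ≠ ⊥)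
    {z w : H} {Z W : ℝ} (hz : Ψ z = Z) (hw : Ψ w = W) {l : ℝ} (hl0 : 0 ≤ l) (hl1 : l ≤ 1) :
    ∃ c : ℝ, Ψ (z + l • (w - z)) = c ∧ c ≤ l * W + (1 - l) * Z := by
  have h := hconv w z l (1 - l) hl0 (by linarith) (by ring)
  rw [hz, hw, ← EReal.coe_mul, ← EReal.coe_mul, ← EReal.coe_add,
    show l • w + (1 - l) • z = z + l • (w - z) by module] at h
  have hne : Ψ (z + l • (w - z)) ≠ ⊤ := ne_top_of_le_ne_top (EReal.coe_ne_top _) h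
  refine ⟨_, (EReal.coe_toReal hne (hbot _)).symm, ?_⟩
  rwa [← EReal.coe_toReal hne (hbot _), EReal.coe_le_coe_iff] at h

lemma isClosed_setOf_mem_subdiffPsi (hlsc : LowerSemicontinuous Ψ) :
    IsClosed {q : H × H | q.2 ∈ subdiffPsi Ψ q.1} := by
  change IsClosed {q : H × H | ∀ w, Ψ q.1 + ((inner ℝ q.2 (w - q.1) : ℝ) : EReal) ≤ Ψ w}
  rw [Set.ofPred_forall]
  refine isClosed_iInter fun w => ?_
  have hcont : Continuous fun q : H × H => (inner ℝ q.2 (w - q.1) : ℝ) := by fun_prop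
  have h : LowerSemicontinuous fun q : H × H => Ψ q.1 + ((inner ℝ q.2 (w - q.1) : ℝ) : EReal) :=
    (hlsc.comp continuous_fst).add' (continuous_coe_real_ereal.comp hcont).lowerSemicontinuous
      fun q => EReal.continuousAt_add (Or.inr (EReal.coe_ne_bot _)) (Or.inr (EReal.coe_ne_top _))
  exact h.isClosed_preimage (Ψ w)

lemma modelQ_eq_coe (A : H →L[ℝ] H) {x p : H} {a b : ℝ} (ha : Ψ x = a) (hb : Ψ (x + p) = b) :
    modelQ f' Ψ A x p = ((inner ℝ (f' x) p + 1 / 2 * inner ℝ p (A p) + b - a : ℝ) : EReal) := by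
  rw [modelQ, ha, hb, ← EReal.coe_add, ← EReal.coe_sub]

lemma modelQ_id_eq_coe {x p : H} {a b : ℝ} (ha : Ψ x = a) (hb : Ψ (x + p) = b) :
    modelQ f' Ψ (ContinuousLinearMap.id ℝ H) x p =
      ((inner ℝ (f' x) p + 1 / 2 * ‖p‖ ^ 2 + b - a : ℝ) : EReal) := by
  rw [modelQ_eq_coe _ ha hb, ContinuousLinearMap.id_apply, real_inner_self_eq_norm_sq]

lemma modelQ_eq_top (A : H →L[ℝ] H) {x p : H} {a : ℝ} (ha : Ψ x = a) (hb : Ψ (x + p) = ⊤) :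
    modelQ f' Ψ A x p = ⊤ := by
  rw [modelQ, ha, hb, EReal.coe_add_top, EReal.top_sub_coe]

lemma modelQ_zero (A : H →L[ℝ] H) {x : H} {a : ℝ} (ha : Ψ x = a) : modelQ f' Ψ A x 0 = 0 := by
  rw [modelQ_eq_coe A ha (by rwa [add_zero])]
  simp

/-- The optimality condition of the proximal step `x + G`: compare `G` with
`G + l • (w - (x + G))` and let `l → 0`. -/
theorem exists_coe_and_neg_add_mem_subdiffPsi (hconv : ConvexEReal Ψ) (hbot : ∀ y, Ψ y ≠ ⊥)
    {x G : H} {a : ℝ} (ha : Ψ x = a)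
    (hmin : ∀ q, modelQ f' Ψ (ContinuousLinearMap.id ℝ H) x G ≤
      modelQ f' Ψ (ContinuousLinearMap.id ℝ H) x q) :
    ∃ b : ℝ, Ψ (x + G) = b ∧ -(f' x + G) ∈ subdiffPsi Ψ (x + G) := by
  have hG : Ψ (x + G) ≠ ⊤ := fun htop => by
    simpa [modelQ_eq_top _ ha htop, modelQ_zero _ ha] using hmin 0
  obtain ⟨b, hb⟩ : ∃ b : ℝ, Ψ (x + G) = b := ⟨_, (EReal.coe_toReal hG (hbot _)).symm⟩
  refine ⟨b, hb, fun w => ?_⟩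
  rcases eq_or_ne (Ψ w) ⊤ with hw | hw
  · exact hw ▸ le_top
  obtain ⟨W, hW⟩ : ∃ W : ℝ, Ψ w = W := ⟨_, (EReal.coe_toReal hw (hbot _)).symm⟩
  rw [hb, hW, ← EReal.coe_add, EReal.coe_le_coe_iff, inner_neg_left]
  set d := w - (x + G)
  suffices b - W - inner ℝ (f' x + G) d ≤ 0 by linarith
  refine nonpos_of_forall_le_mul (d := ‖d‖ ^ 2 / 2) fun l hl0 hl1 => ?_
  obtain ⟨c, hc, hcle⟩ := hconv.exists_coe_le_on_segment hbot hb hW hl0.le hl1.le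
  have hcmp := hmin (G + l • d)
  rw [modelQ_id_eq_coe ha hb, modelQ_id_eq_coe ha (by rwa [← add_assoc]),
    EReal.coe_le_coe_iff, inner_add_right, inner_smul_right, norm_add_sq_real, inner_smul_right,
    norm_smul, Real.norm_of_nonneg hl0.le, mul_pow] at hcmp
  rw [inner_add_left]
  refine le_of_mul_le_mul_left ?_ hl0
  nlinarith

lemma inner_add_sub_le_neg_sq_of_mem_subdiffPsi {x g G : H} {a b : ℝ} (ha : Ψ x = a)
    (hb : Ψ (x + G) = b) (hsub : -(g + G) ∈ subdiffPsi Ψ (x + G)) :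
    inner ℝ g G + b - a ≤ -‖G‖ ^ 2 := by
  have h := hsub x
  rw [ha, hb, show x - (x + G) = -G by abel, inner_neg_neg, inner_add_left,
    real_inner_self_eq_norm_sq, ← EReal.coe_add, EReal.coe_le_coe_iff] at h
  linarith

lemma iInf_modelQ_le (hconv : ConvexEReal Ψ) (hbot : ∀ y, Ψ y ≠ ⊥) (A : H →L[ℝ] H) {M : ℝ}
    (hub : ∀ u, inner ℝ u (A u) ≤ M * ‖u‖ ^ 2) {x G : H} {a b : ℝ} (ha : Ψ x = a)
    (hb : Ψ (x + G) = b) {α : ℝ} (hα0 : 0 ≤ α) (hα1 : α ≤ 1) :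
    ⨅ q, modelQ f' Ψ A x q ≤
      ((α * (inner ℝ (f' x) G + b - a) + α ^ 2 * M * ‖G‖ ^ 2 / 2 : ℝ) : EReal) := by
  obtain ⟨c, hc, hcle⟩ := hconv.exists_coe_le_on_segment hbot ha hb hα0 hα1
  rw [add_sub_cancel_left] at hc
  refine (iInf_le _ (α • G)).trans ?_
  rw [modelQ_eq_coe A ha hc, EReal.coe_le_coe_iff, map_smul, inner_smul_left, inner_smul_right,
    inner_smul_right, RCLike.conj_to_real]
  nlinarith [hub G, sq_nonneg α]

lemma coe_le_iInf_modelQ (A : H →L[ℝ] H) {m : ℝ} (hm : 0 < m)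
    (hlb : ∀ u, m * ‖u‖ ^ 2 ≤ inner ℝ u (A u)) {x z v : H} {a Z : ℝ} (ha : Ψ x = a)
    (hz : Ψ z = Z) (hv : v ∈ subdiffPsi Ψ z) :
    (((Z + inner ℝ v (x - z) - a) - ‖f' x + v‖ ^ 2 / (2 * m) : ℝ) : EReal) ≤
      ⨅ q, modelQ f' Ψ A x q := by
  refine le_iInf fun q => ?_
  rcases eq_or_ne (Ψ (x + q)) ⊤ with hq | hq
  · exact (modelQ_eq_top A ha hq).symm ▸ le_top
  have hsub := hv (x + q)
  obtain ⟨c, hc⟩ : ∃ c : ℝ, Ψ (x + q) = c :=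
    ⟨_, (EReal.coe_toReal hq (ne_bot_of_le_ne_bot (by simp [hz, ← EReal.coe_add]) hsub)).symm⟩
  rw [hz, hc, ← EReal.coe_add, EReal.coe_le_coe_iff,
    show x + q - z = (x - z) + q by abel, inner_add_right] at hsub
  rw [modelQ_eq_coe A ha hc, EReal.coe_le_coe_iff]
  have hcs : -(‖f' x + v‖ * ‖q‖) ≤ inner ℝ (f' x + v) q :=
    neg_le_of_abs_le (abs_real_inner_le_norm _ _)
  have hamgm : ‖f' x + v‖ * ‖q‖ ≤ ‖f' x + v‖ ^ 2 / (2 * m) + m / 2 * ‖q‖ ^ 2 := by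
    rw [div_add' _ _ _ (by positivity), le_div_iff₀ (by positivity)]
    nlinarith [sq_nonneg (‖f' x + v‖ - m * ‖q‖)]
  rw [inner_add_left] at hcs
  nlinarith [hlb q]

lemma eq_coe_sub_of_objF_eq_coe {y : H} {c : ℝ} (h : objF f Ψ y = c) :
    Ψ y = ((c - f y : ℝ) : EReal) := by
  rw [objF] at h
  generalize Ψ y = t at h ⊢
  induction t using EReal.rec with
  | bot => simp at h
  | top => simp at h
  | coe r => rw [← EReal.coe_add, EReal.coe_eq_coe_iff] at h; rw [← h]; simp

theorem decrease_ge_of_inexact_step (hconv : ConvexEReal Ψ) (hbot : ∀ y, Ψ y ≠ ⊥)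
    (A : H →L[ℝ] H) {m M γ η : ℝ} (hm : 0 < m) (hlb : ∀ u, m * ‖u‖ ^ 2 ≤ inner ℝ u (A u))
    (hub : ∀ u, inner ℝ u (A u) ≤ M * ‖u‖ ^ 2) (hγ : 0 ≤ γ) (hη : η ≤ 1)
    {x x' p G : H} {F F' : ℝ} (hF : objF f Ψ x = F) (hF' : objF f Ψ x' = F')
    (hGmin : ∀ q, modelQ f' Ψ (ContinuousLinearMap.id ℝ H) x G ≤
      modelQ f' Ψ (ContinuousLinearMap.id ℝ H) x q)
    (hinexact : modelQ f' Ψ A x p - (⨅ q, modelQ f' Ψ A x q) ≤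
      (η : EReal) * -(⨅ q, modelQ f' Ψ A x q))
    (harmijo : objF f Ψ x' ≤ objF f Ψ x + (γ : EReal) * modelQ f' Ψ A x p)
    {α : ℝ} (hα0 : 0 ≤ α) (hα1 : α ≤ 1) :
    γ * (1 - η) * ((α - α ^ 2 * M / 2) * ‖G‖ ^ 2) ≤ F - F' := by
  have ha := eq_coe_sub_of_objF_eq_coe hF
  obtain ⟨b, hb, hsub⟩ := exists_coe_and_neg_add_mem_subdiffPsi hconv hbot ha hGmin
  have hdesc := inner_add_sub_le_neg_sq_of_mem_subdiffPsi ha hb hsub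
  have hupper := iInf_modelQ_le (f' := f') hconv hbot A hub ha hb hα0 hα1
  have hlower := coe_le_iInf_modelQ (f' := f') A hm hlb ha hb hsub
  obtain ⟨s, hs⟩ : ∃ s : ℝ, ⨅ q, modelQ f' Ψ A x q = s :=
    ⟨_, (EReal.coe_toReal (ne_top_of_le_ne_top (EReal.coe_ne_top _) hupper)
      (ne_bot_of_le_ne_bot (EReal.coe_ne_bot _) hlower)).symm⟩
  rw [hs] at hinexact hupper
  obtain ⟨r, hr, hrs⟩ := EReal.exists_coe_le_of_sub_le (hs ▸ iInf_le _ p) hinexact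
  rw [hF, hF', hr, ← EReal.coe_mul, ← EReal.coe_add, EReal.coe_le_coe_iff] at harmijo
  rw [EReal.coe_le_coe_iff] at hupper
  have hs' : s ≤ -((α - α ^ 2 * M / 2) * ‖G‖ ^ 2) := by nlinarith
  nlinarith [mul_le_mul_of_nonneg_left hrs hγ,
    mul_le_mul_of_nonneg_left hs' (mul_nonneg hγ (sub_nonneg.mpr hη))]

theorem sq_norm_le_mul_decrease (hconv : ConvexEReal Ψ) (hbot : ∀ y, Ψ y ≠ ⊥)
    (A : H →L[ℝ] H) {m M γ η : ℝ} (hm : 0 < m) (hlb : ∀ u, m * ‖u‖ ^ 2 ≤ inner ℝ u (A u))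
    (hub : ∀ u, inner ℝ u (A u) ≤ M * ‖u‖ ^ 2) (hγ : 0 ≤ γ) (hη : η ≤ 1)
    {x x' p G : H} {F F' : ℝ} (hF : objF f Ψ x = F) (hF' : objF f Ψ x' = F')
    (hGmin : ∀ q, modelQ f' Ψ (ContinuousLinearMap.id ℝ H) x G ≤
      modelQ f' Ψ (ContinuousLinearMap.id ℝ H) x q)
    (hinexact : modelQ f' Ψ A x p - (⨅ q, modelQ f' Ψ A x q) ≤
      (η : EReal) * -(⨅ q, modelQ f' Ψ A x q))
    (harmijo : objF f Ψ x' ≤ objF f Ψ x + (γ : EReal) * modelQ f' Ψ A x p) :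
    γ * (1 - η) * ‖G‖ ^ 2 ≤
      M ^ 2 * (1 + m⁻¹ + √(1 - 2 * M⁻¹ + m⁻¹ ^ 2)) ^ 2 / (2 * m) * (F - F') := by
  have hdec {α : ℝ} (hα0 : 0 ≤ α) (hα1 : α ≤ 1) :=
    decrease_ge_of_inexact_step hconv hbot A hm hlb hub hγ hη hF hF' hGmin hinexact harmijo hα0 hα1
  set D := M ^ 2 * (1 + m⁻¹ + √(1 - 2 * M⁻¹ + m⁻¹ ^ 2)) ^ 2 / (2 * m)
  have hD : 0 ≤ D := by positivity
  rcases eq_or_ne G 0 with rfl | hG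
  · simpa using mul_nonneg hD (by simpa using hdec le_rfl zero_le_one)
  have hmM : m ≤ M := le_of_mul_le_mul_right ((hlb G).trans (hub G)) (by positivity)
  obtain ⟨α, hα0, hα1, hα⟩ := exists_one_le_mul_sub_sq hm hmM
  calc γ * (1 - η) * ‖G‖ ^ 2
      ≤ D * (α - α ^ 2 * M / 2) * (γ * (1 - η) * ‖G‖ ^ 2) :=
        le_mul_of_one_le_left (by positivity) hα
    _ = D * (γ * (1 - η) * ((α - α ^ 2 * M / 2) * ‖G‖ ^ 2)) := by ring
    _ ≤ D * (F - F') := mul_le_mul_of_nonneg_left (hdec hα0 hα1) hD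

theorem eq_zero_iff_zero_mem_subdiffF (hconv : ConvexEReal Ψ) (hbot : ∀ y, Ψ y ≠ ⊥)
    {x G : H} {a : ℝ} (ha : Ψ x = a)
    (hmin : ∀ q, modelQ f' Ψ (ContinuousLinearMap.id ℝ H) x G ≤
      modelQ f' Ψ (ContinuousLinearMap.id ℝ H) x q) :
    G = 0 ↔ 0 ∈ subdiffF f' Ψ x := by
  obtain ⟨b, hb, hsub⟩ := exists_coe_and_neg_add_mem_subdiffPsi hconv hbot ha hmin
  constructor
  · rintro rfl
    exact ⟨-f' x, by simpa using hsub, by simp⟩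
  · rintro ⟨v, hv, hv0⟩
    have hdesc := inner_add_sub_le_neg_sq_of_mem_subdiffPsi ha hb hsub
    have h := hv (x + G)
    rw [ha, hb, add_sub_cancel_left, eq_neg_of_add_eq_zero_right hv0.symm, inner_neg_left,
      ← EReal.coe_add, EReal.coe_le_coe_iff] at h
    exact norm_eq_zero.mp (pow_eq_zero_iff two_ne_zero |>.mp (by nlinarith [sq_nonneg ‖G‖]))

theorem zero_mem_subdiffF_of_mapClusterPt (hconv : ConvexEReal Ψ) (hbot : ∀ y, Ψ y ≠ ⊥)
    (hlsc : LowerSemicontinuous Ψ) (hf' : Continuous f') {y G : ℕ → H}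
    (hy : ∀ j, Ψ (y j) ≠ ⊤)
    (hmin : ∀ j q, modelQ f' Ψ (ContinuousLinearMap.id ℝ H) (y j) (G j) ≤
      modelQ f' Ψ (ContinuousLinearMap.id ℝ H) (y j) q)
    (hG : Tendsto (fun j => ‖G j‖) atTop (nhds 0)) {z : H} (hz : MapClusterPt z atTop y) :
    0 ∈ subdiffF f' Ψ z := by
  obtain ⟨φ, hφ, hyz⟩ := Filter.subseq_tendsto_of_neBot hz
  have hG0 : Tendsto (fun j => G (φ j)) atTop (nhds 0) :=
    tendsto_zero_iff_norm_tendsto_zero.mpr (hG.comp hφ.tendsto_atTop)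
  have hpair : Tendsto (fun j => (y (φ j) + G (φ j), -(f' (y (φ j)) + G (φ j)))) atTop
      (nhds (z, -f' z)) := by
    simpa using (hyz.add hG0).prodMk_nhds ((hf'.tendsto z |>.comp hyz).add hG0).neg
  have hmem : -f' z ∈ subdiffPsi Ψ z := by
    refine (isClosed_setOf_mem_subdiffPsi hlsc).mem_of_tendsto hpair (.of_forall fun j => ?_)
    obtain ⟨-, -, hsub⟩ := exists_coe_and_neg_add_mem_subdiffPsi hconv hbot
      (EReal.coe_toReal (hy (φ j)) (hbot _)).symm (hmin (φ j))
    exact hsub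
  exact ⟨-f' z, hmem, by simp⟩

end

theorem statement10_general
    {H : Type*} [NormedAddCommGroup H] [InnerProductSpace ℝ H]
    (f : H → ℝ) (f' : H → H) (Ψ : H → EReal) (Fstar : ℝ)
    (x : ℕ → H) (k : ℕ → ℕ) (Hop : ℕ → H →L[ℝ] H) (p : ℕ → H) (G : ℕ → H)
    (L Mt mt η γ δ0 : ℝ)
    -- f differentiable with L-Lipschitz gradient f'
    (hLip : ∀ a b : H, ‖f' a - f' b‖ ≤ L * ‖a - b‖)
    -- Ψ convex, proper, lower semicontinuous
    (hΨ_conv : ConvexEReal Ψ)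
    (hΨ_proper : ProperEReal Ψ)
    (hΨ_lsc : LowerSemicontinuous Ψ)
    -- F* attained on the nonempty solution set Ω
    (hFstar_lb : ∀ y : H, (Fstar : EReal) ≤ objF f Ψ y)
    -- δ0 = F(x^0) − F*
    (hδ0 : objF f Ψ (x 0) = ((Fstar + δ0 : ℝ) : EReal))
    -- monotone iterates
    (hmono : ∀ t : ℕ, objF f Ψ (x (t + 1)) ≤ objF f Ψ (x t))
    -- strictly increasing indices k_0 < k_1 < ...
    (hk : StrictMono k)
    -- self-adjoint operators with M̃ ⪰ H_{k_i} ⪰ m̃ > 0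
    (hmt : 0 < mt)
    (hH_lb : ∀ i : ℕ, ∀ u : H, mt * ‖u‖ ^ 2 ≤ (inner ℝ u (Hop i u) : ℝ))
    (hH_ub : ∀ i : ℕ, ∀ u : H, (inner ℝ u (Hop i u) : ℝ) ≤ Mt * ‖u‖ ^ 2)
    -- multiplicative inexactness with parameter η ∈ [0,1) at the iterations k_i
    (hη1 : η < 1)
    (hinexact : ∀ i : ℕ,
      modelQ f' Ψ (Hop i) (x (k i)) (p i) -
        (⨅ q : H, modelQ f' Ψ (Hop i) (x (k i)) q) ≤
      (η : EReal) * -(⨅ q : H, modelQ f' Ψ (Hop i) (x (k i)) q))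
    -- update and sufficient decrease with unit step size, γ ∈ (0,1)
    (hγ0 : 0 < γ)
    (harmijo : ∀ i : ℕ, objF f Ψ (x (k i + 1)) ≤
      objF f Ψ (x (k i)) + (γ : EReal) * modelQ f' Ψ (Hop i) (x (k i)) (p i))
    -- G_t is the minimizer of the subproblem with the identity operator
    (hGmin : ∀ t : ℕ, ∀ q : H,
      modelQ f' Ψ (ContinuousLinearMap.id ℝ H) (x t) (G t) ≤
        modelQ f' Ψ (ContinuousLinearMap.id ℝ H) (x t) q) :
    -- ‖G_{k_t}‖ → 0
    Tendsto (fun t : ℕ => ‖G (k t)‖) atTop (nhds 0) ∧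
    -- O(1/t) bound on the minimal squared stationarity measure
    (∀ t : ℕ,
      ((Finset.range (t + 1)).inf' (Finset.nonempty_range_iff.mpr (Nat.succ_ne_zero t))
        (fun i => ‖G (k i)‖ ^ 2)) ≤
      δ0 / (γ * ((t : ℝ) + 1)) *
        (Mt ^ 2 * (1 + mt⁻¹ + Real.sqrt (1 - 2 * Mt⁻¹ + mt⁻¹ ^ 2)) ^ 2 /
          (2 * (1 - η) * mt))) ∧
    -- G_t = 0 iff 0 ∈ ∂F(x^t)
    (∀ t : ℕ, G t = 0 ↔ (0 : H) ∈ subdiffF f' Ψ (x t)) ∧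
    -- every limit point of (x^{k_t}) is stationary
    (∀ z : H, MapClusterPt z atTop (fun t : ℕ => x (k t)) →
      (0 : H) ∈ subdiffF f' Ψ z) := by
  obtain ⟨hbot, -⟩ := hΨ_proper
  obtain ⟨Fv, hFv, hFv_anti, hFv0, hFv_lb⟩ :=
    EReal.exists_antitone_coe (antitone_nat_of_succ_le hmono) hδ0 fun t => hFstar_lb (x t)
  have hΨx (t : ℕ) := eq_coe_sub_of_objF_eq_coe (hFv t)
  set D := Mt ^ 2 * (1 + mt⁻¹ + √(1 - 2 * Mt⁻¹ + mt⁻¹ ^ 2)) ^ 2 / (2 * mt)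
  have hγη : 0 < γ * (1 - η) := mul_pos hγ0 (sub_pos.mpr hη1)
  have hsum (n : ℕ) : ∑ i ∈ Finset.range n, ‖G (k i)‖ ^ 2 ≤ D * δ0 / (γ * (1 - η)) := by
    rw [le_div_iff₀' hγη, Finset.mul_sum]
    refine (sum_range_le_mul_sub hFv_anti hk (by positivity) (fun i =>
      sq_norm_le_mul_decrease hΨ_conv hbot (Hop i) hmt (hH_lb i) (hH_ub i) hγ0.le hη1.le
        (hFv _) (hFv _) (hGmin _) (hinexact i) (harmijo i)) n).trans ?_
    exact mul_le_mul_of_nonneg_left (by linarith [hFv_lb (k n)]) (by positivity)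
  have hGlim : Tendsto (fun t => ‖G (k t)‖) atTop (nhds 0) := by
    simpa using (summable_of_sum_range_le (fun i => sq_nonneg _) hsum).tendsto_atTop_zero.sqrt
  have hf' : Continuous f' :=
    (LipschitzWith.of_dist_le' fun a b => by simpa only [dist_eq_norm] using hLip a b).continuous
  refine ⟨hGlim, fun t => (Finset.inf'_range_le_div t (hsum (t + 1))).trans_eq ?_,
    fun t => eq_zero_iff_zero_mem_subdiffF hΨ_conv hbot (hΨx t) (hGmin t),
    fun z hz => zero_mem_subdiffF_of_mapClusterPt hΨ_conv hbot hΨ_lsc hf'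
      (fun j => hΨx _ ▸ EReal.coe_ne_top _) (fun j => hGmin (k j)) hGlim hz⟩
  have : 1 - η ≠ 0 := (sub_pos.mpr hη1).ne'
  simp only [D]
  field_simp

/-- global convergence of ISQA⁺ in terms of the stationarity measure
`G_t = argmin_p Q_I(p; x^t)`: `‖G_{k_t}‖ → 0`, a `O(1/t)` bound on the minimum squared
measure, characterization of stationarity, and stationarity of all limit points. -/
theorem statement10
    {H : Type*} [NormedAddCommGroup H] [InnerProductSpace ℝ H] [CompleteSpace H]
    (f : H → ℝ) (f' : H → H) (Ψ : H → EReal) (Ω : Set H) (Fstar : ℝ)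
    (x : ℕ → H) (k : ℕ → ℕ) (Hop : ℕ → H →L[ℝ] H) (p : ℕ → H) (G : ℕ → H)
    (L Mt mt η γ δ0 : ℝ)
    -- f differentiable with L-Lipschitz gradient f'
    (hf_diff : ∀ y : H, HasGradientAt f (f' y) y)
    (hL : 0 < L)
    (hLip : ∀ a b : H, ‖f' a - f' b‖ ≤ L * ‖a - b‖)
    -- Ψ convex, proper, lower semicontinuous
    (hΨ_conv : ConvexEReal Ψ)
    (hΨ_proper : ProperEReal Ψ)
    (hΨ_lsc : LowerSemicontinuous Ψ)
    -- F* attained on the nonempty solution set Ω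
    (hΩ_ne : Ω.Nonempty)
    (hΩ : ∀ y : H, y ∈ Ω ↔ objF f Ψ y = (Fstar : EReal))
    (hFstar_lb : ∀ y : H, (Fstar : EReal) ≤ objF f Ψ y)
    -- δ0 = F(x^0) − F*
    (hδ0 : objF f Ψ (x 0) = ((Fstar + δ0 : ℝ) : EReal))
    -- monotone iterates
    (hmono : ∀ t : ℕ, objF f Ψ (x (t + 1)) ≤ objF f Ψ (x t))
    -- strictly increasing indices k_0 < k_1 < ...
    (hk : StrictMono k)
    -- self-adjoint operators with M̃ ⪰ H_{k_i} ⪰ m̃ > 0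
    (hmt : 0 < mt)
    (hH_sa : ∀ i : ℕ, ∀ u v : H, (inner ℝ (Hop i u) v : ℝ) = (inner ℝ u (Hop i v) : ℝ))
    (hH_lb : ∀ i : ℕ, ∀ u : H, mt * ‖u‖ ^ 2 ≤ (inner ℝ u (Hop i u) : ℝ))
    (hH_ub : ∀ i : ℕ, ∀ u : H, (inner ℝ u (Hop i u) : ℝ) ≤ Mt * ‖u‖ ^ 2)
    -- multiplicative inexactness with parameter η ∈ [0,1) at the iterations k_i
    (hη0 : 0 ≤ η) (hη1 : η < 1)
    (hinexact : ∀ i : ℕ,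
      modelQ f' Ψ (Hop i) (x (k i)) (p i) -
        (⨅ q : H, modelQ f' Ψ (Hop i) (x (k i)) q) ≤
      (η : EReal) * -(⨅ q : H, modelQ f' Ψ (Hop i) (x (k i)) q))
    -- update and sufficient decrease with unit step size, γ ∈ (0,1)
    (hγ0 : 0 < γ) (hγ1 : γ < 1)
    (hstep : ∀ i : ℕ, x (k i + 1) = x (k i) + p i)
    (harmijo : ∀ i : ℕ, objF f Ψ (x (k i + 1)) ≤
      objF f Ψ (x (k i)) + (γ : EReal) * modelQ f' Ψ (Hop i) (x (k i)) (p i))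
    -- G_t is the minimizer of the subproblem with the identity operator
    (hGmin : ∀ t : ℕ, ∀ q : H,
      modelQ f' Ψ (ContinuousLinearMap.id ℝ H) (x t) (G t) ≤
        modelQ f' Ψ (ContinuousLinearMap.id ℝ H) (x t) q) :
    -- ‖G_{k_t}‖ → 0
    Tendsto (fun t : ℕ => ‖G (k t)‖) atTop (nhds 0) ∧
    -- O(1/t) bound on the minimal squared stationarity measure
    (∀ t : ℕ,
      ((Finset.range (t + 1)).inf' (Finset.nonempty_range_iff.mpr (Nat.succ_ne_zero t))
        (fun i => ‖G (k i)‖ ^ 2)) ≤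
      δ0 / (γ * ((t : ℝ) + 1)) *
        (Mt ^ 2 * (1 + mt⁻¹ + Real.sqrt (1 - 2 * Mt⁻¹ + mt⁻¹ ^ 2)) ^ 2 /
          (2 * (1 - η) * mt))) ∧
    -- G_t = 0 iff 0 ∈ ∂F(x^t)
    (∀ t : ℕ, G t = 0 ↔ (0 : H) ∈ subdiffF f' Ψ (x t)) ∧
    -- every limit point of (x^{k_t}) is stationary
    (∀ z : H, MapClusterPt z atTop (fun t : ℕ => x (k t)) →
      (0 : H) ∈ subdiffF f' Ψ z) :=
  statement10_general f f' Ψ Fstar x k Hop p G L Mt mt η γ δ0 hLip hΨ_conv hΨ_proper hΨ_lsc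
    hFstar_lb hδ0 hmono hk hmt hH_lb hH_ub hη1 hinexact hγ0 harmijo hGmin
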